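/- For all β, γ > 0, ν* is a Borel probability measure on ℝ with finite first absolute moment and mean zero: ν*(ℝ) = 1, ∫ |x| ν*(dx) < ∞ and ∫ x ν*(dx) = 0. -/

import Mathlib

/-!
With `s = γ / β` and `m = β⁻¹ Ψ(s)`, the substitution `t = exp (-β (x - m))` carries `ν*` to the
Gamma distribution `e^{-t} t^{s-1} dt / Γ(s)` on `(0, ∞)`, and `x = m - (log t) / β`.
So `ν*` has mass `1`; its first absolute moment is finite because `e^{-t} t^{s-1} |log t|` is
integrable; and its mean is `m - Γ'(s) / (β Γ(s)) = 0`, because differentiating Euler's integral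
gives `Γ'(s) = ∫ e^{-t} t^{s-1} log t dt`.
-/

open MeasureTheory

section Substitution

open Real Set

variable {E : Type*} [NormedAddCommGroup E] [NormedSpace ℝ E] {β : ℝ}

lemma injective_exp_neg_mul (hβ : β ≠ 0) : Function.Injective fun x : ℝ => exp (-β * x) :=
  fun _ _ h => mul_left_cancel₀ (neg_ne_zero.2 hβ) (exp_injective h)

lemma range_exp_neg_mul (hβ : β ≠ 0) : range (fun x : ℝ => exp (-β * x)) = Ioi 0 := by
  refine Subset.antisymm (range_subset_iff.2 fun x => exp_pos _) fun t (ht : 0 < t) => ?_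
  refine ⟨-log t / β, ?_⟩
  dsimp only
  rw [show -β * (-log t / β) = log t by field_simp, exp_log ht]

lemma hasDerivAt_exp_neg_mul (x : ℝ) :
    HasDerivAt (fun x : ℝ => exp (-β * x)) (-β * exp (-β * x)) x := by
  simpa [mul_comm] using ((hasDerivAt_id x).const_mul (-β)).exp

lemma integral_Ioi_eq_integral_comp_exp_neg_mul (hβ : β ≠ 0) (g : ℝ → E) :
    ∫ t in Ioi 0, g t = ∫ x, (|β| * exp (-β * x)) • g (exp (-β * x)) := by
  rw [← range_exp_neg_mul hβ, ← image_univ, integral_image_eq_integral_abs_deriv_smul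
    MeasurableSet.univ (fun x _ => (hasDerivAt_exp_neg_mul x).hasDerivWithinAt)
    (injective_exp_neg_mul hβ).injOn g, Measure.restrict_univ]
  simp only [abs_mul, abs_neg, abs_exp]

lemma integrableOn_Ioi_iff_integrable_comp_exp_neg_mul (hβ : β ≠ 0) (g : ℝ → E) :
    IntegrableOn g (Ioi 0) ↔ Integrable fun x => (|β| * exp (-β * x)) • g (exp (-β * x)) := by
  rw [← range_exp_neg_mul hβ, ← image_univ, integrableOn_image_iff_integrableOn_abs_deriv_smul
    MeasurableSet.univ (fun x _ => (hasDerivAt_exp_neg_mul x).hasDerivWithinAt)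
    (injective_exp_neg_mul hβ).injOn g, integrableOn_univ]
  simp only [abs_mul, abs_neg, abs_exp]

end Substitution

namespace Real

open Set Filter Topology

lemma abs_log_le_rpow_add_rpow_neg_div {t a : ℝ} (ht : 0 < t) (ha : 0 < a) :
    |log t| ≤ (t ^ a + t ^ (-a)) / a := by
  have hup : log t ≤ t ^ a / a := log_le_rpow_div ht.le ha
  have hdown : -log t ≤ t ^ (-a) / a := by
    simpa [log_inv, inv_rpow ht.le, rpow_neg ht.le] using log_le_rpow_div (inv_pos.2 ht).le ha
  have : 0 ≤ t ^ a / a := by positivity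
  have : 0 ≤ t ^ (-a) / a := by positivity
  rw [add_div]
  exact abs_le.2 ⟨by linarith, by linarith⟩

lemma integrableOn_gammaIntegrand_mul_log {s : ℝ} (hs : 0 < s) :
    IntegrableOn (fun t => exp (-t) * t ^ (s - 1) * log t) (Ioi 0) := by
  set a := s / 2
  have hdom : IntegrableOn
      (fun t => (exp (-t) * t ^ (s + a - 1) + exp (-t) * t ^ (s - a - 1)) / a) (Ioi 0) :=
    ((GammaIntegral_convergent (by positivity)).add
      (GammaIntegral_convergent (by simp only [a]; linarith))).div_const a
  refine hdom.mono' (by fun_prop) ((ae_restrict_iff' measurableSet_Ioi).2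
    (Filter.Eventually.of_forall fun t (ht : 0 < t) => ?_))
  rw [norm_mul, norm_mul, norm_of_nonneg (exp_pos _).le, norm_of_nonneg (rpow_pos_of_pos ht _).le,
    norm_eq_abs]
  calc exp (-t) * t ^ (s - 1) * |log t|
      ≤ exp (-t) * t ^ (s - 1) * ((t ^ a + t ^ (-a)) / a) := by
        gcongr
        exact abs_log_le_rpow_add_rpow_neg_div ht (by positivity)
    _ = (exp (-t) * t ^ (s + a - 1) + exp (-t) * t ^ (s - a - 1)) / a := by
        rw [sub_eq_add_neg s a, add_sub_right_comm, add_sub_right_comm, rpow_add ht, rpow_add ht]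
        ring

lemma deriv_Gamma_eq_integral {s : ℝ} (hs : 0 < s) :
    deriv Gamma s = ∫ t in Ioi 0, exp (-t) * t ^ (s - 1) * log t := by
  have hs' : 0 < (s : ℂ).re := by rwa [Complex.ofReal_re]
  have hGamma : Complex.Gamma =ᶠ[𝓝 (s : ℂ)] Complex.GammaIntegral := by
    filter_upwards [(isOpen_lt continuous_const Complex.continuous_re).mem_nhds hs'] with z hz
    exact Complex.Gamma_eq_integral hz
  have hreal := ((Complex.hasDerivAt_GammaIntegral hs').congr_of_eventuallyEq hGamma).real_of_complex
  simp only [Complex.Gamma_ofReal, Complex.ofReal_re] at hreal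
  rw [hreal.deriv, ← Complex.ofReal_re (∫ t in Ioi 0, exp (-t) * t ^ (s - 1) * log t),
    ← integral_complex_ofReal]
  congr 1
  refine setIntegral_congr_fun measurableSet_Ioi fun t (ht : 0 < t) => ?_
  push_cast
  rw [Complex.ofReal_cpow ht.le]
  push_cast
  ring

end Real

section Gumbel

open Real Set

noncomputable def gumbelKernel (β γ x : ℝ) : ℝ := exp (-γ * x - exp (-β * x))

variable {β γ : ℝ}

lemma gumbelKernel_pos (x : ℝ) : 0 < gumbelKernel β γ x := exp_pos _

@[fun_prop]
lemma continuous_gumbelKernel : Continuous (gumbelKernel β γ) := by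
  unfold gumbelKernel; fun_prop

lemma smul_gammaIntegrand_exp_neg_mul (hβ : β ≠ 0) (g : ℝ → ℝ) (x : ℝ) :
    (|β| * exp (-β * x)) • (exp (-exp (-β * x)) * exp (-β * x) ^ (γ / β - 1) *
      g (-log (exp (-β * x)) / β)) = |β| * (g x * gumbelKernel β γ x) := by
  rw [log_exp, ← exp_mul, smul_eq_mul, gumbelKernel,
    show -(-β * x) / β = x by field_simp]
  have : -γ * x - exp (-β * x) = -β * x + (-exp (-β * x) + -β * x * (γ / β - 1)) := by
    field_simp; ring
  rw [this, exp_add, exp_add]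
  ring

lemma integrable_mul_gumbelKernel_iff (hβ : β ≠ 0) (g : ℝ → ℝ) :
    Integrable (fun x => g x * gumbelKernel β γ x) ↔
      IntegrableOn (fun t => exp (-t) * t ^ (γ / β - 1) * g (-log t / β)) (Ioi 0) := by
  rw [integrableOn_Ioi_iff_integrable_comp_exp_neg_mul hβ]
  simp only [smul_gammaIntegrand_exp_neg_mul hβ]
  exact (integrable_const_mul_iff (isUnit_iff_ne_zero.2 (abs_ne_zero.2 hβ)) _).symm

lemma integral_mul_gumbelKernel (hβ : β ≠ 0) (g : ℝ → ℝ) :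
    ∫ x, g x * gumbelKernel β γ x =
      |β|⁻¹ * ∫ t in Ioi 0, exp (-t) * t ^ (γ / β - 1) * g (-log t / β) := by
  rw [integral_Ioi_eq_integral_comp_exp_neg_mul hβ]
  simp only [smul_gammaIntegrand_exp_neg_mul hβ, integral_const_mul]
  field_simp

lemma integrable_gumbelKernel (hβ : 0 < β) (hγ : 0 < γ) : Integrable (gumbelKernel β γ) := by
  simpa only [one_mul] using (integrable_mul_gumbelKernel_iff hβ.ne' (fun _ => 1)).2
    (by simpa only [mul_one] using GammaIntegral_convergent (div_pos hγ hβ))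

lemma integral_gumbelKernel (hβ : 0 < β) (hγ : 0 < γ) : ∫ x, gumbelKernel β γ x = Gamma (γ / β) / β := by
  have h := integral_mul_gumbelKernel (γ := γ) hβ.ne' (fun _ => 1)
  simp only [one_mul, mul_one] at h
  rw [h, ← Gamma_eq_integral (div_pos hγ hβ), abs_of_pos hβ, inv_mul_eq_div]

lemma integrable_id_mul_gumbelKernel (hβ : 0 < β) (hγ : 0 < γ) : Integrable (fun x => x * gumbelKernel β γ x) := by
  refine (integrable_mul_gumbelKernel_iff hβ.ne' fun x => x).2 ?_
  exact ((integrableOn_gammaIntegrand_mul_log (div_pos hγ hβ)).div_const (-β)).congr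
    (ae_of_all _ fun t => by ring)

lemma integral_id_mul_gumbelKernel (hβ : 0 < β) (hγ : 0 < γ) :
    ∫ x, x * gumbelKernel β γ x = -deriv Gamma (γ / β) / β ^ 2 := by
  have h := integral_mul_gumbelKernel (γ := γ) hβ.ne' fun x => x
  have hlog (t : ℝ) : exp (-t) * t ^ (γ / β - 1) * (-log t / β) =
      -(exp (-t) * t ^ (γ / β - 1) * log t) / β := by ring
  simp only [h, hlog, integral_div, integral_neg, abs_of_pos hβ,
    ← deriv_Gamma_eq_integral (div_pos hγ hβ)]
  field_simp

end Gumbel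

section RealDensity

open Set

variable {α : Type*} [MeasurableSpace α] {μ : Measure α} {f : α → ℝ}

lemma withDensity_ofReal_apply_univ (hf : Integrable f μ) (hf0 : 0 ≤ f) :
    μ.withDensity (fun x => ENNReal.ofReal (f x)) univ = ENNReal.ofReal (∫ x, f x ∂μ) := by
  rw [withDensity_apply _ MeasurableSet.univ, Measure.restrict_univ,
    ofReal_integral_eq_lintegral_ofReal hf (ae_of_all _ hf0)]

lemma integrable_withDensity_ofReal_iff (hf : Measurable f) (hf0 : 0 ≤ f) {g : α → ℝ} :
    Integrable g (μ.withDensity fun x => ENNReal.ofReal (f x)) ↔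
      Integrable (fun x => g x * f x) μ := by
  rw [integrable_withDensity_iff_integrable_smul' hf.ennreal_ofReal
    (ae_of_all _ fun _ => ENNReal.ofReal_lt_top)]
  simp only [ENNReal.toReal_ofReal (hf0 _), smul_eq_mul, mul_comm]

lemma integral_withDensity_ofReal (hf : Measurable f) (hf0 : 0 ≤ f) (g : α → ℝ) :
    ∫ x, g x ∂μ.withDensity (fun x => ENNReal.ofReal (f x)) = ∫ x, g x * f x ∂μ := by
  rw [integral_withDensity_eq_integral_toReal_smul hf.ennreal_ofReal
    (ae_of_all _ fun _ => ENNReal.ofReal_lt_top)]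
  simp only [ENNReal.toReal_ofReal (hf0 _), smul_eq_mul, mul_comm]

end RealDensity

section TranslatedDensity

open Set

variable {f : ℝ → ℝ}

lemma id_mul_comp_sub_right_eq (a : ℝ) :
    (fun x => x * f (x - a)) = fun x => (fun y => y * f y + a * f y) (x - a) := by
  ext x
  ring

lemma withDensity_comp_sub_right_apply_univ (hf : Integrable f) (hf0 : 0 ≤ f) (a : ℝ) :
    volume.withDensity (fun x => ENNReal.ofReal (f (x - a))) univ =
      ENNReal.ofReal (∫ x, f x) := by
  rw [withDensity_ofReal_apply_univ (hf.comp_sub_right a) fun x => hf0 (x - a),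
    integral_sub_right_eq_self f a]

lemma integrable_abs_withDensity_comp_sub_right (hf : Measurable f) (hf0 : 0 ≤ f)
    (hfi : Integrable f) (hxf : Integrable fun x => x * f x) (a : ℝ) :
    Integrable (fun x => |x|) (volume.withDensity fun x => ENNReal.ofReal (f (x - a))) := by
  have hfa : Measurable fun x => f (x - a) := hf.comp (measurable_sub_const a)
  rw [integrable_withDensity_ofReal_iff hfa fun x => hf0 (x - a)]
  have hshift : Integrable fun x => x * f (x - a) := by
    rw [id_mul_comp_sub_right_eq]
    exact (hxf.add (hfi.const_mul a)).comp_sub_right a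
  exact hshift.abs.congr (ae_of_all _ fun x => by simp only [abs_mul, abs_of_nonneg (hf0 _)])

lemma integral_id_withDensity_comp_sub_right (hf : Measurable f) (hf0 : 0 ≤ f)
    (hfi : Integrable f) (hxf : Integrable fun x => x * f x) (a : ℝ) :
    ∫ x, x ∂volume.withDensity (fun x => ENNReal.ofReal (f (x - a))) =
      (∫ x, x * f x) + a * ∫ x, f x := by
  have hfa : Measurable fun x => f (x - a) := hf.comp (measurable_sub_const a)
  rw [integral_withDensity_ofReal hfa fun x => hf0 (x - a),
    id_mul_comp_sub_right_eq, integral_sub_right_eq_self (fun y => y * f y + a * f y),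
    integral_add hxf (hfi.const_mul a), integral_const_mul]

end TranslatedDensity

lemma div_Gamma_one_add_div {β γ : ℝ} (hβ : 0 < β) (hγ : 0 < γ) :
    γ / Real.Gamma (1 + γ / β) = β / Real.Gamma (γ / β) := by
  rw [add_comm, Real.Gamma_add_one (div_pos hγ hβ).ne']
  have := (Real.Gamma_pos_of_pos (div_pos hγ hβ)).ne'
  field_simp

/-- `ν*` is a Borel probability measure on `ℝ` with finite first absolute
moment and mean zero. -/
theorem nustar_probability_centered
    (β γ : ℝ) (hβ : 0 < β) (hγ : 0 < γ)
    (Ψ : ℝ → ℝ) (hΨ : ∀ a, Ψ a = deriv Real.Gamma a / Real.Gamma a)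
    (ν : Measure ℝ)
    (hν : ν = volume.withDensity (fun x => ENNReal.ofReal
      ((γ / Real.Gamma (1 + γ / β)) * Real.exp
        (-γ * (x - β⁻¹ * Ψ (γ / β)) - Real.exp (-β * (x - β⁻¹ * Ψ (γ / β))))))) :
    ν Set.univ = 1 ∧ Integrable (fun x : ℝ => |x|) ν ∧ (∫ x, x ∂ν) = 0 := by
  rw [div_Gamma_one_add_div hβ hγ] at hν
  set m := β⁻¹ * Ψ (γ / β) with hm
  set p : ℝ → ℝ := fun y => β / Real.Gamma (γ / β) * gumbelKernel β γ y
  have hΓ := Real.Gamma_pos_of_pos (div_pos hγ hβ)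
  have hp0 : 0 ≤ p := fun x => mul_nonneg (by positivity) (gumbelKernel_pos x).le
  have hpm : Measurable p := by fun_prop
  have hpi : Integrable p := (integrable_gumbelKernel hβ hγ).const_mul _
  have hxp : Integrable fun x => x * p x :=
    ((integrable_id_mul_gumbelKernel hβ hγ).const_mul (β / Real.Gamma (γ / β))).congr
      (ae_of_all _ fun x => by ring)
  have hmass : ∫ x, p x = 1 := by
    rw [integral_const_mul, integral_gumbelKernel hβ hγ]
    field_simp
  have hmean : ∫ x, x * p x = -m := by
    simp only [p, mul_left_comm _ (β / _), integral_const_mul,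
      integral_id_mul_gumbelKernel hβ hγ, hm, hΨ]
    field_simp
  obtain rfl : ν = volume.withDensity fun x => ENNReal.ofReal (p (x - m)) := hν
  refine ⟨?_, integrable_abs_withDensity_comp_sub_right hpm hp0 hpi hxp m, ?_⟩
  · rw [withDensity_comp_sub_right_apply_univ hpi hp0, hmass, ENNReal.ofReal_one]
  · rw [integral_id_withDensity_comp_sub_right hpm hp0 hpi hxp, hmean, hmass]
    ring
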